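/- arXiv:0803.1225 — 5 statements merged into one kernel-verified Lean document; each statement's English description precedes it below -/
import Mathlib

section
/- For the density p_ℓ(x,y) = e^{-(x+y)}(x+y)^ℓ/(ℓ+1)! on (0,∞)^2, the quantity v(ℓ) = E(XY) − E(X)² is strictly negative for every integer ℓ ≥ 1 and equals 0 for ℓ = 0. -/
open MeasureTheory Real Set

noncomputable def Q : ℕ → ℝ → ℝ
  | 0, _ => 1
  | n+1, x => x ^ (n+1) + (n+1) * Q n x

lemma Q_hasDerivAt (n : ℕ) (x : ℝ) : HasDerivAt (Q n) (Q n x - x ^ n) x := by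
  induction n generalizing x with
  | zero => simpa [Q] using hasDerivAt_const x (1:ℝ)
  | succ n ih =>
      have h1 : HasDerivAt (fun x : ℝ => x ^ (n+1)) (((n:ℝ)+1) * x ^ n) x := by
        simpa using hasDerivAt_pow (n+1) x
      have h2 := h1.add ((ih x).const_mul ((n:ℝ)+1))
      have he : (fun y : ℝ => y ^ (n+1) + ((n:ℝ)+1) * Q n y) = Q (n+1) := by
        funext y; simp [Q]
      rw [show ((fun x : ℝ => x ^ (n+1)) + fun y => ((n:ℝ)+1) * Q n y) = Q (n+1) from he] at h2
      refine h2.congr_deriv ?_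
      simp only [Q]; ring

lemma Q_nonneg (n : ℕ) (x : ℝ) (hx : 0 ≤ x) : 0 ≤ Q n x := by
  induction n with
  | zero => simp [Q]
  | succ n ih => simp only [Q]; positivity

lemma Q_zero (n : ℕ) : Q n 0 = Nat.factorial n := by
  induction n with
  | zero => simp [Q]
  | succ n ih => simp only [Q, ih, Nat.factorial_succ]; push_cast; ring

lemma Q_tendsto (n : ℕ) : Filter.Tendsto (fun x => exp (-x) * Q n x) Filter.atTop (nhds 0) := by
  induction n with
  | zero => simpa [Q] using Real.tendsto_exp_neg_atTop_nhds_zero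
  | succ n ih =>
      have h1 := tendsto_pow_mul_exp_neg_atTop_nhds_zero (n+1)
      have h2 : Filter.Tendsto (fun x => x ^ (n+1) * exp (-x) + ((n:ℝ)+1) * (exp (-x) * Q n x))
          Filter.atTop (nhds 0) := by
        simpa using h1.add (ih.const_mul ((n:ℝ)+1))
      refine h2.congr fun x => ?_
      simp [Q]; ring

lemma key (n : ℕ) (x : ℝ) (hx : 0 ≤ x) :
    IntegrableOn (fun y => exp (-(x+y)) * (x+y) ^ n) (Ioi (0:ℝ)) ∧
    ∫ y in Ioi (0:ℝ), exp (-(x+y)) * (x+y) ^ n = exp (-x) * Q n x := by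
  have hH : ∀ t : ℝ, HasDerivAt (fun t => -(exp (-t) * Q n t)) (exp (-t) * t ^ n) t := by
    intro t
    have h1 : HasDerivAt (fun t : ℝ => exp (-t)) (-exp (-t)) t := by
      simpa [Function.comp_def] using ((Real.hasDerivAt_exp (-t)).comp t (hasDerivAt_neg t))
    have h2 := (h1.mul (Q_hasDerivAt n t)).neg
    refine h2.congr_deriv ?_; ring
  have hg : ∀ y ∈ Ici (0:ℝ), HasDerivAt (fun y => -(exp (-(x+y)) * Q n (x+y)))
      (exp (-(x+y)) * (x+y) ^ n) y := by
    intro y _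
    have h3 := (hH (x+y)).comp y ((hasDerivAt_id y).const_add x)
    simpa [Function.comp_def] using h3
  have hpos : ∀ y ∈ Ioi (0:ℝ), 0 ≤ exp (-(x+y)) * (x+y) ^ n := by
    intro y hy
    have : (0:ℝ) ≤ x + y := by have := hy.out; linarith
    positivity
  have htend : Filter.Tendsto (fun y => -(exp (-(x+y)) * Q n (x+y))) Filter.atTop (nhds 0) := by
    have h4 : Filter.Tendsto (fun y : ℝ => x + y) Filter.atTop Filter.atTop :=
      Filter.tendsto_atTop_add_const_left _ x Filter.tendsto_id
    simpa using ((Q_tendsto n).comp h4).neg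
  refine ⟨integrableOn_Ioi_deriv_of_nonneg' hg hpos htend, ?_⟩
  rw [integral_Ioi_of_hasDerivAt_of_nonneg' hg hpos htend]
  simp

lemma base (j : ℕ) : IntegrableOn (fun t => exp (-t) * t ^ j) (Ioi (0:ℝ)) ∧
    ∫ t in Ioi (0:ℝ), exp (-t) * t ^ j = Nat.factorial j := by
  have h := key j 0 le_rfl
  simp only [zero_add] at h
  refine ⟨h.1, ?_⟩
  rw [h.2, Q_zero]; simp

lemma F_int (m n : ℕ) : IntegrableOn (fun x => x ^ m * (exp (-x) * Q n x)) (Ioi (0:ℝ)) := by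
  induction n with
  | zero =>
      have he : (fun x : ℝ => x ^ m * (exp (-x) * Q 0 x)) = fun x => exp (-x) * x ^ m := by
        funext x; simp [Q]; ring
      rw [he]; exact (base m).1
  | succ n ih =>
      have he : (fun x : ℝ => x ^ m * (exp (-x) * Q (n+1) x)) =
          fun x => exp (-x) * x ^ (m+n+1) + ((n:ℝ)+1) * (x ^ m * (exp (-x) * Q n x)) := by
        funext x; simp [Q]; ring
      rw [he]
      exact (base (m+n+1)).1.add (ih.const_mul _)

lemma F_succ (m n : ℕ) : ∫ x in Ioi (0:ℝ), x ^ m * (exp (-x) * Q (n+1) x)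
    = Nat.factorial (m+n+1) + ((n:ℝ)+1) * ∫ x in Ioi (0:ℝ), x ^ m * (exp (-x) * Q n x) := by
  have he : (fun x : ℝ => x ^ m * (exp (-x) * Q (n+1) x)) =
      fun x => exp (-x) * x ^ (m+n+1) + ((n:ℝ)+1) * (x ^ m * (exp (-x) * Q n x)) := by
    funext x; simp [Q]; ring
  rw [he, integral_add (base (m+n+1)).1 ((F_int m n).const_mul _), (base (m+n+1)).2,
    integral_const_mul]

lemma F0 (n : ℕ) : ∫ x in Ioi (0:ℝ), x ^ 0 * (exp (-x) * Q n x) = Nat.factorial (n+1) := by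
  induction n with
  | zero =>
      have he : (fun x : ℝ => x ^ 0 * (exp (-x) * Q 0 x)) = fun x => exp (-x) * x ^ 0 := by
        funext x; simp [Q]
      rw [he, (base 0).2]; simp
  | succ n ih =>
      rw [F_succ, ih, show 0+n+1 = n+1 by omega, Nat.factorial_succ (n+1)]
      push_cast; ring

lemma F1 (n : ℕ) : ∫ x in Ioi (0:ℝ), x ^ 1 * (exp (-x) * Q n x) = Nat.factorial (n+2) / 2 := by
  induction n with
  | zero =>
      have he : (fun x : ℝ => x ^ 1 * (exp (-x) * Q 0 x)) = fun x => exp (-x) * x ^ 1 := by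
        funext x; simp [Q]; ring
      rw [he, (base 1).2]; norm_num [Nat.factorial]
  | succ n ih =>
      rw [F_succ, ih, show 1+n+1 = n+2 by omega, show n+3 = (n+2)+1 from rfl,
        Nat.factorial_succ (n+2)]
      push_cast; ring

lemma F2 (n : ℕ) : ∫ x in Ioi (0:ℝ), x ^ 2 * (exp (-x) * Q n x) = Nat.factorial (n+3) / 3 := by
  induction n with
  | zero =>
      have he : (fun x : ℝ => x ^ 2 * (exp (-x) * Q 0 x)) = fun x => exp (-x) * x ^ 2 := by
        funext x; simp [Q]; ring
      rw [he, (base 2).2]; norm_num [Nat.factorial]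
  | succ n ih =>
      rw [F_succ, ih, show 2+n+1 = n+3 by omega, show n+4 = (n+3)+1 from rfl,
        Nat.factorial_succ (n+3)]
      push_cast; ring

lemma v_formula (n : ℕ)
    (p : ℕ → ℝ → ℝ → ℝ)
    (hp : ∀ n x y, p n x y = Real.exp (-(x + y)) * (x + y) ^ n / Nat.factorial (n + 1))
    (v : ℕ → ℝ)
    (hv : ∀ n, v n =
      (∫ x in Ioi (0:ℝ), ∫ y in Ioi (0:ℝ), p n x y) *
        (∫ x in Ioi (0:ℝ), ∫ y in Ioi (0:ℝ), x * y * p n x y) -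
      (∫ x in Ioi (0:ℝ), ∫ y in Ioi (0:ℝ), x * p n x y) ^ 2) :
    v n = -((n:ℝ) * (n + 2)) / 12 := by
  set K : ℝ := (Nat.factorial (n+1) : ℝ) with hK
  have hK0 : K ≠ 0 := by
    simp [hK, Nat.factorial_ne_zero]
  have hA : (∫ x in Ioi (0:ℝ), ∫ y in Ioi (0:ℝ), p n x y) = 1 := by
    rw [setIntegral_congr_fun measurableSet_Ioi
      (g := fun x => (exp (-x) * Q n x) / K)
      (fun x hx => by
        simp only [hp]
        rw [integral_div, (key n x (le_of_lt hx)).2])]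
    rw [integral_div]
    have h0 := F0 n
    simp only [pow_zero, one_mul] at h0
    rw [h0, ← hK, div_self hK0]
  have hB : (∫ x in Ioi (0:ℝ), ∫ y in Ioi (0:ℝ), x * p n x y) = ((n:ℝ) + 2) / 2 := by
    rw [setIntegral_congr_fun measurableSet_Ioi
      (g := fun x => x * ((exp (-x) * Q n x) / K))
      (fun x hx => by
        simp only [hp]
        rw [integral_const_mul, integral_div, (key n x (le_of_lt hx)).2])]
    have he : (fun x : ℝ => x * ((exp (-x) * Q n x) / K)) =
        fun x => (x ^ 1 * (exp (-x) * Q n x)) / K := by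
      funext x; ring
    rw [he, integral_div, F1 n, show n+2 = (n+1)+1 from rfl, Nat.factorial_succ (n+1)]
    push_cast
    rw [← hK]
    field_simp
    ring
  have hC : (∫ x in Ioi (0:ℝ), ∫ y in Ioi (0:ℝ), x * y * p n x y)
      = ((n:ℝ) + 2) * ((n:ℝ) + 3) / 6 := by
    rw [setIntegral_congr_fun measurableSet_Ioi
      (g := fun x => (x / K) * (exp (-x) * Q (n+1) x - x * (exp (-x) * Q n x)))
      (fun x hx => by
        have hx0 : (0:ℝ) ≤ x := le_of_lt hx
        have he2 : (fun y : ℝ => x * y * p n x y) =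
            fun y => (x / K) * (exp (-(x+y)) * (x+y) ^ (n+1)
              - x * (exp (-(x+y)) * (x+y) ^ n)) := by
          funext y; rw [hp]; ring
        rw [he2, integral_const_mul,
          integral_sub (key (n+1) x hx0).1 ((key n x hx0).1.const_mul x),
          (key (n+1) x hx0).2, integral_const_mul, (key n x hx0).2])]
    have he3 : (fun x : ℝ => (x / K) * (exp (-x) * Q (n+1) x - x * (exp (-x) * Q n x))) =
        fun x => ((x ^ 1 * (exp (-x) * Q (n+1) x)) - (x ^ 2 * (exp (-x) * Q n x))) / K := by
      funext x; ring
    rw [he3, integral_div, integral_sub (F_int 1 (n+1)) (F_int 2 n), F1 (n+1), F2 n,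
      show n+1+2 = n+3 by omega, show n+3 = (n+2)+1 from rfl, Nat.factorial_succ (n+2),
      show n+2 = (n+1)+1 from rfl, Nat.factorial_succ (n+1)]
    push_cast
    rw [← hK]
    field_simp
    ring
  rw [hv n, hA, hB, hC]
  ring

theorem covariance_sign (ℓ : ℕ)
    (p : ℕ → ℝ → ℝ → ℝ)
    (hp : ∀ n x y, p n x y = Real.exp (-(x + y)) * (x + y) ^ n / Nat.factorial (n + 1))
    (v : ℕ → ℝ)
    (hv : ∀ n, v n =
      (∫ x in Ioi (0:ℝ), ∫ y in Ioi (0:ℝ), p n x y) *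
        (∫ x in Ioi (0:ℝ), ∫ y in Ioi (0:ℝ), x * y * p n x y) -
      (∫ x in Ioi (0:ℝ), ∫ y in Ioi (0:ℝ), x * p n x y) ^ 2) :
    (1 ≤ ℓ → v ℓ < 0) ∧ v 0 = 0 := by
  constructor
  · intro hℓ
    rw [v_formula ℓ p hp v hv]
    have h1 : (1:ℝ) ≤ (ℓ:ℝ) := by exact_mod_cast hℓ
    nlinarith
  · rw [v_formula 0 p hp v hv]
    norm_num
end

section
/- Among the family p_ℓ(x,y) = e^{-(x+y)}(x+y)^ℓ/(ℓ+1)! for nonnegative integers ℓ, the only member satisfying E(XY) = E(X)E(Y) is ℓ = 0, and p_0(x,y) = e^{-x}e^{-y} has product structure, so X and Y are independent. -/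
/-!
Expanding `(x + y) ^ ℓ` binomially reduces every moment of `e^{-(x+y)} (x+y)^ℓ` on the quadrant
to products of Gamma integrals, and Pascal's rule sums them to
`∫∫ x^a y^b e^{-(x+y)} (x+y)^ℓ = a! b! (a+b+ℓ+1)! / (a+b+1)!`.
Hence `E X = E Y = (ℓ+2)/2` and `E XY = (ℓ+2)(ℓ+3)/6`, so the covariance `-ℓ(ℓ+2)/12` vanishes
only at `ℓ = 0`.
-/

open scoped Nat

open Finset in
theorem Nat.sum_antidiagonal_choose_mul_factorial_add_mul_factorial_add (a b n : ℕ) :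
    (∑ ij ∈ antidiagonal n, n.choose ij.1 * ((a + ij.1)! * (b + ij.2)!)) * (a + b + 1)! =
      a ! * b ! * (a + b + n + 1)! := by
  induction n generalizing a b with
  | zero => simp
  | succ n ih =>
    have hsplit := sum_antidiagonal_choose_succ_mul (R := ℕ) (fun i j => (a + i)! * (b + j)!) n
    have e1 : ∑ ij ∈ antidiagonal n, n.choose ij.1 * ((a + ij.1)! * (b + (ij.2 + 1))!) =
        ∑ ij ∈ antidiagonal n, n.choose ij.1 * ((a + ij.1)! * (b + 1 + ij.2)!) :=
      sum_congr rfl fun ij _ => by rw [add_comm ij.2, add_assoc]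
    have e2 : ∑ ij ∈ antidiagonal n, n.choose ij.2 * ((a + (ij.1 + 1))! * (b + ij.2)!) =
        ∑ ij ∈ antidiagonal n, n.choose ij.1 * ((a + 1 + ij.1)! * (b + ij.2)!) :=
      sum_congr rfl fun ij hij => by
        rw [Nat.choose_symm_of_eq_add (mem_antidiagonal.1 hij).symm, add_comm ij.1, add_assoc]
    have h1 := ih a (b + 1)
    have h2 := ih (a + 1) b
    rw [show a + (b + 1) + 1 = a + b + 1 + 1 by omega,
      show a + (b + 1) + n + 1 = a + b + (n + 1) + 1 by omega, Nat.factorial_succ b] at h1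
    rw [show a + 1 + b + 1 = a + b + 1 + 1 by omega,
      show a + 1 + b + n + 1 = a + b + (n + 1) + 1 by omega, Nat.factorial_succ a] at h2
    simp only [Nat.cast_id, e1, e2] at hsplit
    rw [Nat.factorial_succ (a + b + 1)] at h1 h2
    rw [hsplit]
    apply Nat.eq_of_mul_eq_mul_left (show 0 < a + b + 1 + 1 by omega)
    linarith

open Finset in
theorem Real.pow_mul_pow_mul_exp_neg_add_mul_add_pow (a b n : ℕ) (x y : ℝ) :
    x ^ a * y ^ b * (exp (-(x + y)) * (x + y) ^ n) = ∑ ij ∈ antidiagonal n,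
      (n.choose ij.1 : ℝ) * ((exp (-x) * x ^ (a + ij.1)) * (exp (-y) * y ^ (b + ij.2))) := by
  rw [(Commute.all x y).add_pow', mul_sum, mul_sum]
  refine sum_congr rfl fun ij _ => ?_
  rw [nsmul_eq_mul, neg_add, exp_add]
  ring

open MeasureTheory Real Set

theorem integral_exp_neg_mul_pow_Ioi (n : ℕ) : ∫ x in Ioi (0 : ℝ), exp (-x) * x ^ n = n ! := by
  rw [← Gamma_nat_eq_factorial, Gamma_eq_integral (by positivity)]
  refine setIntegral_congr_fun measurableSet_Ioi fun x _ => ?_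
  rw [add_sub_cancel_right, rpow_natCast]

theorem integrableOn_exp_neg_mul_pow_Ioi (n : ℕ) :
    IntegrableOn (fun x : ℝ => exp (-x) * x ^ n) (Ioi 0) :=
  (GammaIntegral_convergent (s := n + 1) (by positivity)).congr_fun
    (fun x _ => by simp only [add_sub_cancel_right, rpow_natCast]) measurableSet_Ioi

theorem integral_integral_sum_mul {α β ι : Type*} [MeasurableSpace α] [MeasurableSpace β]
    {μ : Measure α} {ν : Measure β} (s : Finset ι) (c : ι → ℝ) {f : ι → α → ℝ} {g : ι → β → ℝ}
    (hf : ∀ i ∈ s, Integrable (f i) μ) (hg : ∀ i ∈ s, Integrable (g i) ν) :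
    ∫ x, ∫ y, ∑ i ∈ s, c i * (f i x * g i y) ∂ν ∂μ =
      ∑ i ∈ s, c i * ((∫ x, f i x ∂μ) * ∫ y, g i y ∂ν) := by
  have hinner : ∀ x, ∫ y, ∑ i ∈ s, c i * (f i x * g i y) ∂ν =
      ∑ i ∈ s, (c i * ∫ y, g i y ∂ν) * f i x := fun x => by
    rw [integral_finsetSum s fun i hi => ((hg i hi).const_mul (f i x)).const_mul (c i)]
    refine Finset.sum_congr rfl fun i _ => ?_
    rw [integral_const_mul, integral_const_mul]
    ring
  simp_rw [hinner]
  rw [integral_finsetSum s fun i hi => (hf i hi).const_mul _]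
  refine Finset.sum_congr rfl fun i _ => ?_
  rw [integral_const_mul]
  ring

theorem integral_integral_pow_mul_pow_mul_exp_neg_add_mul_pow (a b n : ℕ) :
    ∫ x in Ioi (0 : ℝ), ∫ y in Ioi (0 : ℝ), x ^ a * y ^ b * (exp (-(x + y)) * (x + y) ^ n) =
      a ! * b ! * (a + b + n + 1)! / (a + b + 1)! := by
  simp_rw [pow_mul_pow_mul_exp_neg_add_mul_add_pow]
  rw [integral_integral_sum_mul _ _ (fun _ _ => integrableOn_exp_neg_mul_pow_Ioi _)
    (fun _ _ => integrableOn_exp_neg_mul_pow_Ioi _)]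
  simp_rw [integral_exp_neg_mul_pow_Ioi]
  rw [eq_div_iff (by positivity)]
  exact_mod_cast Nat.sum_antidiagonal_choose_mul_factorial_add_mul_factorial_add a b n

theorem integral_integral_pow_mul_pow_mul_exp_neg_add_mul_pow_div (a b ℓ : ℕ) :
    ∫ x in Ioi (0 : ℝ), ∫ y in Ioi (0 : ℝ),
        x ^ a * y ^ b * (exp (-(x + y)) * (x + y) ^ ℓ / (ℓ + 1)!) =
      a ! * b ! * (a + b + ℓ + 1)! / ((a + b + 1)! * (ℓ + 1)!) := by
  simp_rw [← mul_div_assoc, integral_div, integral_integral_pow_mul_pow_mul_exp_neg_add_mul_pow,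
    div_div]

theorem parameter_collapse_first_example
    (p : ℕ → ℝ → ℝ → ℝ)
    (hp : ∀ n x y, p n x y = Real.exp (-(x + y)) * (x + y) ^ n / Nat.factorial (n + 1)) :
    (∀ ℓ : ℕ,
      ((∫ x in Ioi (0:ℝ), ∫ y in Ioi (0:ℝ), x * y * p ℓ x y) =
          (∫ x in Ioi (0:ℝ), ∫ y in Ioi (0:ℝ), x * p ℓ x y) *
          (∫ x in Ioi (0:ℝ), ∫ y in Ioi (0:ℝ), y * p ℓ x y)) ↔ ℓ = 0) ∧
    (∀ x y : ℝ, p 0 x y = Real.exp (-x) * Real.exp (-y)) := by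
  refine ⟨fun ℓ => ?_, fun x y => by rw [hp, neg_add, exp_add]; simp⟩
  have hXY := integral_integral_pow_mul_pow_mul_exp_neg_add_mul_pow_div 1 1 ℓ
  have hX := integral_integral_pow_mul_pow_mul_exp_neg_add_mul_pow_div 1 0 ℓ
  have hY := integral_integral_pow_mul_pow_mul_exp_neg_add_mul_pow_div 0 1 ℓ
  simp only [pow_one, pow_zero, mul_one, one_mul, ← hp] at hXY hX hY
  rw [show 1 + 1 + ℓ + 1 = ℓ + 1 + 1 + 1 by ring] at hXY
  rw [show 1 + 0 + ℓ + 1 = ℓ + 1 + 1 by ring] at hX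
  rw [show 0 + 1 + ℓ + 1 = ℓ + 1 + 1 by ring] at hY
  simp only [Nat.factorial_succ, Nat.factorial_zero] at hXY hX hY
  push_cast at hXY hX hY
  rw [hXY, hX, hY]
  field_simp
  constructor
  · intro h
    exact_mod_cast (by linarith : (ℓ : ℝ) = 0)
  · rintro rfl
    norm_num
end

section
/- If a bilinear probability density a₁₁xy + a₁₀x + a₀₁y + a₀₀ on [0,1]² has zero covariance between X and Y, then X and Y are independent (the density factors as a product of a function of x and a function of y). -/
open MeasureTheory

lemma quad_int (p q r : ℝ) :
    (∫ t in (0:ℝ)..1, (p * t ^ 2 + q * t + r)) = p / 3 + q / 2 + r := by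
  have h1 : IntervalIntegrable (fun t : ℝ => p * t ^ 2) volume 0 1 :=
    (Continuous.intervalIntegrable (by continuity) 0 1)
  have h2 : IntervalIntegrable (fun t : ℝ => q * t) volume 0 1 :=
    (Continuous.intervalIntegrable (by continuity) 0 1)
  have h3 : IntervalIntegrable (fun t : ℝ => r) volume 0 1 :=
    (Continuous.intervalIntegrable (by continuity) 0 1)
  rw [intervalIntegral.integral_add (h1.add h2) h3,
    intervalIntegral.integral_add h1 h2,
    intervalIntegral.integral_const_mul, intervalIntegral.integral_const_mul,
    intervalIntegral.integral_const, integral_pow, integral_id]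
  norm_num
  ring

theorem bilinear_zero_cov_independent (a₀₀ a₁₀ a₀₁ a₁₁ : ℝ)
    (pdf : ℝ → ℝ → ℝ)
    (hpdf : ∀ x y, pdf x y = a₁₁ * x * y + a₁₀ * x + a₀₁ * y + a₀₀)
    (hnonneg : ∀ x ∈ Set.Icc (0:ℝ) 1, ∀ y ∈ Set.Icc (0:ℝ) 1, 0 ≤ pdf x y)
    (hnorm : (∫ x in (0:ℝ)..1, ∫ y in (0:ℝ)..1, pdf x y) = 1)
    (hcov : (∫ x in (0:ℝ)..1, ∫ y in (0:ℝ)..1, x * y * pdf x y) =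
      (∫ x in (0:ℝ)..1, ∫ y in (0:ℝ)..1, x * pdf x y) *
      (∫ x in (0:ℝ)..1, ∫ y in (0:ℝ)..1, y * pdf x y)) :
    ∃ g h : ℝ → ℝ, ∀ x y : ℝ, pdf x y = g x * h y := by
  -- compute the four integrals
  have hA : ∀ x : ℝ, (∫ y in (0:ℝ)..1, pdf x y)
      = 0 * x ^ 2 + (a₁₁ / 2 + a₁₀) * x + (a₀₁ / 2 + a₀₀) := by
    intro x
    have h : ∀ y : ℝ, pdf x y
        = 0 * y ^ 2 + (a₁₁ * x + a₀₁) * y + (a₁₀ * x + a₀₀) := by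
      intro y; rw [hpdf]; ring
    simp only [h]; rw [quad_int]; ring
  have hB : ∀ x : ℝ, (∫ y in (0:ℝ)..1, x * y * pdf x y)
      = (a₁₁ / 3 + a₁₀ / 2) * x ^ 2 + (a₀₁ / 3 + a₀₀ / 2) * x + 0 := by
    intro x
    have h : ∀ y : ℝ, x * y * pdf x y
        = (a₁₁ * x ^ 2 + a₀₁ * x) * y ^ 2 + (a₁₀ * x ^ 2 + a₀₀ * x) * y + 0 := by
      intro y; rw [hpdf]; ring
    simp only [h]; rw [quad_int]; ring
  have hC : ∀ x : ℝ, (∫ y in (0:ℝ)..1, x * pdf x y)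
      = (a₁₁ / 2 + a₁₀) * x ^ 2 + (a₀₁ / 2 + a₀₀) * x + 0 := by
    intro x
    have h : ∀ y : ℝ, x * pdf x y
        = 0 * y ^ 2 + (a₁₁ * x ^ 2 + a₀₁ * x) * y + (a₁₀ * x ^ 2 + a₀₀ * x) := by
      intro y; rw [hpdf]; ring
    simp only [h]; rw [quad_int]; ring
  have hD : ∀ x : ℝ, (∫ y in (0:ℝ)..1, y * pdf x y)
      = 0 * x ^ 2 + (a₁₁ / 3 + a₁₀ / 2) * x + (a₀₁ / 3 + a₀₀ / 2) := by
    intro x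
    have h : ∀ y : ℝ, y * pdf x y
        = (a₁₁ * x + a₀₁) * y ^ 2 + (a₁₀ * x + a₀₀) * y + 0 := by
      intro y; rw [hpdf]; ring
    simp only [h]; rw [quad_int]; ring
  simp only [hA] at hnorm
  simp only [hB, hC, hD] at hcov
  rw [quad_int] at hnorm
  rw [quad_int, quad_int, quad_int] at hcov
  -- key algebraic identity
  have key : a₁₁ * a₀₀ = a₁₀ * a₀₁ := by
    linear_combination 144 * hcov + (36 * a₀₀ + 24 * a₁₀ + 24 * a₀₁ + 16 * a₁₁) * hnorm
  by_cases h11 : a₁₁ = 0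
  · have h0 : a₁₀ * a₀₁ = 0 := by rw [← key, h11]; ring
    rcases mul_eq_zero.mp h0 with h | h
    · exact ⟨fun _ => 1, fun y => a₀₁ * y + a₀₀, fun x y => by rw [hpdf, h11, h]; ring⟩
    · exact ⟨fun x => a₁₀ * x + a₀₀, fun _ => 1, fun x y => by rw [hpdf, h11, h]; ring⟩
  · refine ⟨fun x => a₁₁ * x + a₀₁, fun y => (a₁₁ * y + a₁₀) / a₁₁, fun x y => ?_⟩
    rw [hpdf]
    field_simp
    ring_nf
    linear_combination key
end

section
/- The function h(ρ) = ρ² + 2ρ(1 − ln(1+ρ)) − 2ln(1+ρ) satisfies h(ρ) > 0 for all ρ ∈ (0,1); hence the equation (1−ρ)²·h(ρ) = 0 has no solution with 0 < ρ < 1. -/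
/-!
With `u = 1 + ρ` the function is `u² - 1 - 2u log u = 2u (sinh (log u) - log u)`, and
`t < sinh t` for `t = log u > 0`.
-/

open Real

theorem log_lt_half_sub_inv {x : ℝ} (hx : 1 < x) : log x < (x - x⁻¹) / 2 := by
  rw [← sinh_log (by positivity)]
  exact self_lt_sinh_iff.mpr (log_pos hx)

theorem sq_add_two_mul_one_sub_log_sub_two_log_pos {ρ : ℝ} (hρ : 0 < ρ) :
    0 < ρ ^ 2 + 2 * ρ * (1 - log (1 + ρ)) - 2 * log (1 + ρ) := by
  have hlog := log_lt_half_sub_inv (by linarith : 1 < 1 + ρ)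
  have hfactor : ρ ^ 2 + 2 * ρ * (1 - log (1 + ρ)) - 2 * log (1 + ρ)
      = 2 * (1 + ρ) * ((1 + ρ - (1 + ρ)⁻¹) / 2 - log (1 + ρ)) := by
    field_simp
    ring
  rw [hfactor]
  have : 0 < 1 + ρ := by linarith
  have : 0 < (1 + ρ - (1 + ρ)⁻¹) / 2 - log (1 + ρ) := by linarith
  positivity

theorem bessel_obstruction :
    (∀ ρ : ℝ, 0 < ρ → ρ < 1 →
      0 < ρ ^ 2 + 2 * ρ * (1 - Real.log (1 + ρ)) - 2 * Real.log (1 + ρ)) ∧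
    ¬∃ ρ : ℝ, 0 < ρ ∧ ρ < 1 ∧
      (1 - ρ) ^ 2 *
        (ρ ^ 2 + 2 * ρ * (1 - Real.log (1 + ρ)) - 2 * Real.log (1 + ρ)) = 0 := by
  refine ⟨fun ρ hρ _ ↦ sq_add_two_mul_one_sub_log_sub_two_log_pos hρ, ?_⟩
  rintro ⟨ρ, hρ0, hρ1, hzero⟩
  have hsq : (1 - ρ) ^ 2 ≠ 0 := pow_ne_zero 2 (by linarith)
  exact (sq_add_two_mul_one_sub_log_sub_two_log_pos hρ0).ne'
    ((mul_eq_zero.mp hzero).resolve_left hsq)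
end

section
/- For a product measure μ = μ₁ ⊗ μ₂ on ℝ² with all moments finite and invertible truncated moment matrix M_d (indexed by monomials x^i y^j, i+j ≤ d), the inverse M_d^{-1} satisfies the zeros in the inverse condition: the entry indexed by monomials x^{a1}y^{a2} and x^{b1}y^{b2} vanishes whenever max(a1,b1) + max(a2,b2) > d. -/
/-!
The moment matrix of `μ₁ ⊗ μ₂` is the restriction to the staircase `{i + j ≤ d}` of the Kronecker
product `H₁ ⊗ H₂` of the Hankel moment matrices of `μ₁` and `μ₂`. Being an invertible Gram matrix,
`M` is positive definite, hence so are its principal submatrices `μ₂(ℝ) • H₁` and `μ₁(ℝ) • H₂`, and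
the positive semidefinite `Hₖ` are invertible, hence positive definite. So they factor as
`Hₖ = Lₖ Dₖ Lₖᵀ` with `Lₖ` lower triangular, and `L₁ ⊗ L₂` and its inverse are lower triangular
for the product order on exponents. The staircase is a lower set, so restricting to it commutes
with these triangular products: `M = L D Lᵀ` with `L⁻¹` still triangular for the product order.
Then `M⁻¹ = L⁻ᵀ D⁻¹ L⁻¹`, and in `M⁻¹ a b = ∑ c, L⁻¹ c a * D⁻¹ c * L⁻¹ c b` only exponents
`c ≥ a ⊔ b` contribute; the staircase has none when `|a ⊔ b| > d`.
-/

open MeasureTheory Matrix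
open scoped Kronecker

namespace Matrix

variable {α β γ ι κ R : Type*}

/-- Unlike `Matrix.IsLowerTriangular`, which over a partial order only asks the entries with
`i < j` to vanish, this also kills the entries at incomparable positions. -/
def IsLowerTriangularLE [Preorder α] [Zero R] (U : Matrix α α R) : Prop :=
  ∀ ⦃i j⦄, ¬ j ≤ i → U i j = 0

theorem IsLowerTriangular.isLowerTriangularLE [LinearOrder α] [Zero R] {U : Matrix α α R}
    (hU : U.IsLowerTriangular) : U.IsLowerTriangularLE :=
  fun _ _ hij => hU (not_le.1 hij)

theorem IsLowerTriangularLE.mul_diagonal [Preorder α] [Fintype α] [DecidableEq α]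
    [NonUnitalNonAssocSemiring R] {U : Matrix α α R} (hU : U.IsLowerTriangularLE) (w : α → R) :
    (U * diagonal w).IsLowerTriangularLE := fun i j hij => by
  rw [Matrix.mul_diagonal, hU hij, zero_mul]

theorem IsLowerTriangularLE.kronecker [Preorder ι] [Preorder κ] [MulZeroClass R]
    {A : Matrix ι ι R} {B : Matrix κ κ R} (hA : A.IsLowerTriangularLE)
    (hB : B.IsLowerTriangularLE) : (A ⊗ₖ B).IsLowerTriangularLE := by
  rintro ⟨i₁, i₂⟩ ⟨j₁, j₂⟩ hij
  rw [kronecker_apply]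
  rcases not_and_or.1 (Prod.mk_le_mk.not.1 hij) with h | h
  · rw [hA h, zero_mul]
  · rw [hB h, mul_zero]

/-- The row of `U` at a point of a lower set is supported inside the set. -/
theorem IsLowerTriangularLE.submatrix_mul [Preorder α] [Fintype α] [NonUnitalNonAssocSemiring R]
    {P : α → Prop} [DecidablePred P] (hP : IsLowerSet {a | P a}) {U : Matrix α α R}
    (hU : U.IsLowerTriangularLE) (B : Matrix α β R) (g : γ → β) :
    (U * B).submatrix (Subtype.val : {a // P a} → α) g
      = U.submatrix (Subtype.val : {a // P a} → α) (Subtype.val : {a // P a} → α)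
        * B.submatrix (Subtype.val : {a // P a} → α) g := by
  ext a b
  simp only [submatrix_apply, mul_apply]
  rw [← Finset.sum_subtype (Finset.univ.filter P) (by simp) fun c => U a c * B c (g b)]
  refine (Finset.sum_filter_of_ne fun c _ hc => hP ?_ a.2).symm
  by_contra h
  exact hc (by rw [hU h, zero_mul])

def HasLDL [Preorder α] [Fintype α] [DecidableEq α] [CommSemiring R] (A : Matrix α α R) :
    Prop :=
  ∃ (L K : Matrix α α R) (w : α → R), L.IsLowerTriangularLE ∧ K.IsLowerTriangularLE ∧
    L * K = 1 ∧ A = L * diagonal w * Lᵀ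

theorem PosDef.hasLDL [LinearOrder α] [Fintype α] [WellFoundedLT α] [LocallyFiniteOrderBot α]
    {H : Matrix α α ℝ} (hH : H.PosDef) : H.HasLDL := by
  have hK : (LDL.lowerInv hH).IsLowerTriangular := fun _ _ hij => LDL.lowerInv_triangular hH hij
  refine ⟨LDL.lower hH, LDL.lowerInv hH, LDL.diagEntries hH,
    IsLowerTriangular.isLowerTriangularLE (blockTriangular_inv_of_blockTriangular hK),
    hK.isLowerTriangularLE, inv_mul_of_invertible _, ?_⟩
  rw [← conjTranspose_eq_transpose_of_trivial]
  exact (LDL.lower_conj_diag hH).symm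

theorem HasLDL.kronecker [Preorder ι] [Fintype ι] [DecidableEq ι] [Preorder κ] [Fintype κ]
    [DecidableEq κ] [CommSemiring R] {A : Matrix ι ι R} {B : Matrix κ κ R} (hA : A.HasLDL)
    (hB : B.HasLDL) : (A ⊗ₖ B).HasLDL := by
  obtain ⟨L₁, K₁, w₁, hL₁, hK₁, hLK₁, rfl⟩ := hA
  obtain ⟨L₂, K₂, w₂, hL₂, hK₂, hLK₂, rfl⟩ := hB
  refine ⟨L₁ ⊗ₖ L₂, K₁ ⊗ₖ K₂, fun p => w₁ p.1 * w₂ p.2, hL₁.kronecker hL₂, hK₁.kronecker hK₂,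
    by rw [← mul_kronecker_mul, hLK₁, hLK₂, one_kronecker_one], ?_⟩
  rw [mul_kronecker_mul, mul_kronecker_mul, diagonal_kronecker_diagonal, kroneckerMap_transpose]

theorem HasLDL.inv_submatrix_apply_eq_zero [Preorder α] [Fintype α] [DecidableEq α] [CommRing R]
    {A : Matrix α α R} (hA : A.HasLDL) {P : α → Prop} [DecidablePred P]
    (hP : IsLowerSet {a | P a}) {a b : {a // P a}} (hab : ∀ c : {a // P a}, a ≤ c → ¬ b ≤ c) :
    (A.submatrix (Subtype.val : {a // P a} → α) Subtype.val)⁻¹ a b = 0 := by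
  obtain ⟨L, K, w, hL, hK, hLK, rfl⟩ := hA
  have hLK' : L.submatrix (Subtype.val : {a // P a} → α) (Subtype.val : {a // P a} → α)
      * K.submatrix (Subtype.val : {a // P a} → α) (Subtype.val : {a // P a} → α) = 1 := by
    rw [← hL.submatrix_mul hP, hLK, submatrix_one _ Subtype.val_injective]
  rw [(hL.mul_diagonal w).submatrix_mul hP, hL.submatrix_mul hP,
    submatrix_diagonal _ _ Subtype.val_injective, ← transpose_submatrix, mul_inv_rev, mul_inv_rev,
    ← transpose_nonsing_inv, inv_eq_right_inv hLK', inv_diagonal, mul_apply]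
  refine Finset.sum_eq_zero fun c _ => ?_
  rw [transpose_apply, diagonal_mul, submatrix_apply, submatrix_apply]
  by_cases hac : a ≤ c
  · rw [hK (hab c hac), mul_zero, mul_zero]
  · rw [hK hac, zero_mul]

theorem kronecker_submatrix_const_right [CommMagma R] (A : Matrix ι ι R) (B : Matrix κ κ R)
    (k : κ) : (A ⊗ₖ B).submatrix (fun i => (i, k)) (fun i => (i, k)) = B k k • A := by
  ext i j
  exact mul_comm (A i j) (B k k)

theorem kronecker_submatrix_const_left [Mul R] (A : Matrix ι ι R) (B : Matrix κ κ R) (i : ι) :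
    (A ⊗ₖ B).submatrix (fun k => (i, k)) (fun k => (i, k)) = A i i • B :=
  rfl

open scoped ComplexOrder in
theorem PosSemidef.posDef_of_submatrix_eq_smul {𝕜 : Type*} [RCLike 𝕜] [Fintype ι] [DecidableEq ι]
    [Fintype κ] [DecidableEq κ] {A : Matrix ι ι 𝕜} (hA : A.PosSemidef) {N : Matrix κ κ 𝕜}
    (hN : N.PosDef) {e : ι → κ} (he : Function.Injective e) {c : 𝕜}
    (hNA : N.submatrix e e = c • A) : A.PosDef := by
  have hunit := (hN.submatrix he).isUnit
  rw [hNA, isUnit_iff_isUnit_det, det_smul] at hunit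
  exact hA.posDef_iff_isUnit.2 ((isUnit_iff_isUnit_det A).2 (isUnit_of_mul_isUnit_right hunit))

end Matrix

section IntegralGram

variable {Ω Ω' ι κ : Type*} [MeasurableSpace Ω] [MeasurableSpace Ω']

noncomputable def integralGram (μ : Measure Ω) (f : ι → Ω → ℝ) : Matrix ι ι ℝ :=
  of fun i j => ∫ ω, f i ω * f j ω ∂μ

theorem posSemidef_integralGram [Fintype ι] (μ : Measure Ω) (f : ι → Ω → ℝ)
    (hf : ∀ i j, Integrable (fun ω => f i ω * f j ω) μ) : (integralGram μ f).PosSemidef := by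
  refine .of_dotProduct_mulVec_nonneg ?_ fun x => ?_
  · ext i j
    simp only [integralGram, conjTranspose_apply, of_apply, star_trivial, mul_comm]
  have hsq : ∀ ω, (∑ i, x i * f i ω) ^ 2 = ∑ i, ∑ j, x i * x j * (f i ω * f j ω) := fun ω => by
    rw [sq, Finset.sum_mul_sum]
    exact Finset.sum_congr rfl fun i _ => Finset.sum_congr rfl fun j _ => by ring
  have hquad : star x ⬝ᵥ (integralGram μ f *ᵥ x) = ∫ ω, (∑ i, x i * f i ω) ^ 2 ∂μ := by
    simp_rw [hsq]
    rw [integral_finsetSum _ fun i _ => integrable_finsetSum _ fun j _ => (hf i j).const_mul _]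
    refine Finset.sum_congr rfl fun i _ => ?_
    rw [integral_finsetSum _ fun j _ => (hf i j).const_mul _, mulVec, dotProduct, Finset.mul_sum]
    refine Finset.sum_congr rfl fun j _ => ?_
    rw [integral_const_mul, integralGram, of_apply, star_trivial]
    ring
  rw [hquad]
  exact integral_nonneg fun ω => sq_nonneg _

theorem integralGram_prod (μ : Measure Ω) (ν : Measure Ω') [SFinite μ] [SFinite ν]
    (f : ι → Ω → ℝ) (g : κ → Ω' → ℝ) :
    integralGram (μ.prod ν) (fun p z => f p.1 z.1 * g p.2 z.2)
      = integralGram μ f ⊗ₖ integralGram ν g := by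
  ext ⟨i, k⟩ ⟨j, l⟩
  simp only [integralGram, of_apply, kronecker_apply]
  rw [← integral_prod_mul]
  congr 1
  ext z
  ring

end IntegralGram

theorem isLowerSet_setOf_add_le (d : ℕ) :
    IsLowerSet {p : Fin (d + 1) × Fin (d + 1) | (p.1 : ℕ) + (p.2 : ℕ) ≤ d} :=
  fun _ _ hqp hp => le_trans (Nat.add_le_add hqp.1 hqp.2) hp

theorem product_measure_zeros_in_inverse (d : ℕ)
    (μ₁ μ₂ : Measure ℝ) [IsFiniteMeasure μ₁] [IsFiniteMeasure μ₂]
    (hm₁ : ∀ n : ℕ, Integrable (fun x : ℝ => x ^ n) μ₁)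
    (hm₂ : ∀ n : ℕ, Integrable (fun x : ℝ => x ^ n) μ₂)
    (M : Matrix {p : Fin (d + 1) × Fin (d + 1) // (p.1 : ℕ) + (p.2 : ℕ) ≤ d}
                {p : Fin (d + 1) × Fin (d + 1) // (p.1 : ℕ) + (p.2 : ℕ) ≤ d} ℝ)
    (hM : ∀ a b, M a b =
      ∫ z : ℝ × ℝ, z.1 ^ ((a.1.1 : ℕ) + (b.1.1 : ℕ)) * z.2 ^ ((a.1.2 : ℕ) + (b.1.2 : ℕ))
        ∂(μ₁.prod μ₂))
    (hinv : IsUnit M) :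
    ∀ a b, d < max (a.1.1 : ℕ) (b.1.1 : ℕ) + max (a.1.2 : ℕ) (b.1.2 : ℕ) →
      M⁻¹ a b = 0 := by
  set H₁ := integralGram μ₁ fun (i : Fin (d + 1)) (t : ℝ) => t ^ (i : ℕ)
  set H₂ := integralGram μ₂ fun (i : Fin (d + 1)) (t : ℝ) => t ^ (i : ℕ)
  have hH₁ : H₁.PosSemidef :=
    posSemidef_integralGram _ _ fun i j => by simpa only [← pow_add] using hm₁ _
  have hH₂ : H₂.PosSemidef :=
    posSemidef_integralGram _ _ fun i j => by simpa only [← pow_add] using hm₂ _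
  obtain rfl : M = (H₁ ⊗ₖ H₂).submatrix Subtype.val Subtype.val := by
    ext a b
    rw [hM, submatrix_apply, ← integralGram_prod]
    simp only [integralGram, of_apply, pow_add]
    congr 1
    ext z
    ring
  have hpd := ((hH₁.kronecker hH₂).submatrix Subtype.val).posDef_iff_isUnit.2 hinv
  have hH₁ : H₁.PosDef := hH₁.posDef_of_submatrix_eq_smul hpd
    (e := fun i => ⟨(i, 0), by simpa using i.is_le⟩) (fun i j h => by simpa using h)
    (kronecker_submatrix_const_right H₁ H₂ 0)
  have hH₂ : H₂.PosDef := hH₂.posDef_of_submatrix_eq_smul hpd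
    (e := fun k => ⟨(0, k), by simpa using k.is_le⟩) (fun i j h => by simpa using h)
    (kronecker_submatrix_const_left H₁ H₂ 0)
  intro a b hab
  exact (hH₁.hasLDL.kronecker hH₂.hasLDL).inv_submatrix_apply_eq_zero (isLowerSet_setOf_add_le d)
    fun c hac hbc =>
      (hab.trans_le (Nat.add_le_add (max_le hac.1 hbc.1) (max_le hac.2 hbc.2))).not_ge c.2
end
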